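/- For every ε > 0 and every pair of ε-potentials (f, g): QOT_ε − OT ≤ ∫_{Ω₀} (f₀ − f) dμ₀ + ∫_{Ω₁} (g₀ − g) dμ₁ ≤ 2 · (QOT_ε − OT). -/

import Mathlib

/-!
Write `F = x²/2 - f`, `G = y²/2 - g`, so that `(x - y)²/2 = F x + G y - (x y - f x - g y)`.
The defining identities of the `ε`-potentials say exactly that `π_ε = ρ • (μ₀ ⊗ μ₁)`, with
`ρ = (x y - f x - g y)₊ / ε`, is a coupling; its cost is `∫ F + ∫ G - ε ∫ ρ²`. For any coupling with
density `ξ`, `ξ (x y - f x - g y) ≤ ε ξ ρ ≤ ε (ξ² + ρ²) / 2`, so `QOT_ε = ∫ F + ∫ G - ε/2 ∫ ρ²`,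
attained at `π_ε`. Likewise Fenchel–Young for `(f₀, g₀)`, with equality on the graph of `T₀`,
gives `OT = ∫ F₀ + ∫ G₀`. The middle term of the claim is therefore `QOT_ε - OT + ε/2 ∫ ρ²`,
which is at least `QOT_ε - OT`, and at most `2 (QOT_ε - OT)` because `π_ε` competes in the
unregularized problem: `OT ≤ ∫ F + ∫ G - ε ∫ ρ² = QOT_ε - ε/2 ∫ ρ²`.
-/

open MeasureTheory Set
open scoped Classical ENNReal

noncomputable section

/-- `μ` is a probability measure supported on `[a,b]` with continuous density `u`
bounded below by `lam` and above by `Lam` on `[a,b]`. -/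
def IsGoodMarginal (μ : Measure ℝ) (u : ℝ → ℝ) (a b lam Lam : ℝ) : Prop :=
  IsProbabilityMeasure μ ∧
  μ = (volume.restrict (Icc a b)).withDensity (fun x => ENNReal.ofReal (u x)) ∧
  ContinuousOn u (Icc a b) ∧
  ∀ x ∈ Icc a b, lam ≤ u x ∧ u x ≤ Lam

/-- `(f,g)` is a pair of `ε`-potentials for the quadratically regularized OT problem. -/
def IsPotentialPair (μ₀ μ₁ : Measure ℝ) (a₀ b₀ a₁ b₁ ε : ℝ) (f g : ℝ → ℝ) : Prop :=
  (∃ K, LipschitzOnWith K f (Icc a₀ b₀)) ∧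
  (∃ K, LipschitzOnWith K g (Icc a₁ b₁)) ∧
  (∀ x ∈ Icc a₀ b₀, ∫ y in Icc a₁ b₁, max (x * y - f x - g y) 0 ∂μ₁ = ε) ∧
  (∀ y ∈ Icc a₁ b₁, ∫ x in Icc a₀ b₀, max (x * y - f x - g y) 0 ∂μ₀ = ε)

/-- the `x`-section `S_x` of the support of the optimal coupling. -/
def secX (f g : ℝ → ℝ) (a₁ b₁ x : ℝ) : Set ℝ :=
  {y ∈ Icc a₁ b₁ | 0 ≤ x * y - f x - g y}

/-- the `y`-section `S^y` of the support of the optimal coupling. -/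
def secY (f g : ℝ → ℝ) (a₀ b₀ y : ℝ) : Set ℝ :=
  {x ∈ Icc a₀ b₀ | 0 ≤ x * y - f x - g y}

/-- `T_ε(x) = (∫_{S_x} y dμ₁)/μ₁(S_x)`, the derivative `f'` of the potential `f`. -/
def Tmap (μ₁ : Measure ℝ) (f g : ℝ → ℝ) (a₁ b₁ x : ℝ) : ℝ :=
  (∫ y in secX f g a₁ b₁ x, y ∂μ₁) / (μ₁ (secX f g a₁ b₁ x)).toReal

/-- the symmetric quantity, the derivative `g'` of the potential `g`. -/
def Gmap (μ₀ : Measure ℝ) (f g : ℝ → ℝ) (a₀ b₀ y : ℝ) : ℝ :=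
  (∫ x in secY f g a₀ b₀ y, x ∂μ₀) / (μ₀ (secY f g a₀ b₀ y)).toReal

/-- left endpoint `y_m(x)` of `S_x`. -/
def ymF (f g : ℝ → ℝ) (a₁ b₁ x : ℝ) : ℝ := sInf (secX f g a₁ b₁ x)

/-- right endpoint `y_M(x)` of `S_x`. -/
def yMF (f g : ℝ → ℝ) (a₁ b₁ x : ℝ) : ℝ := sSup (secX f g a₁ b₁ x)

/-- left endpoint `x_m(y)` of `S^y`. -/
def xmF (f g : ℝ → ℝ) (a₀ b₀ y : ℝ) : ℝ := sInf (secY f g a₀ b₀ y)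

/-- right endpoint `x_M(y)` of `S^y`. -/
def xMF (f g : ℝ → ℝ) (a₀ b₀ y : ℝ) : ℝ := sSup (secY f g a₀ b₀ y)

/-- `T₀` is the (nondecreasing) Monge map from `μ₀` to `μ₁`. -/
def IsMongeMap (μ₀ μ₁ : Measure ℝ) (T₀ : ℝ → ℝ) : Prop :=
  Monotone T₀ ∧ Measure.map T₀ μ₀ = μ₁

/-- convex conjugate relative to `[a,b]`. -/
def conjOn (f : ℝ → ℝ) (a b y : ℝ) : ℝ := sSup ((fun x => x * y - f x) '' Icc a b)

/-- the set of couplings of `μ₀` and `μ₁`. -/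
def Couplings (μ₀ μ₁ : Measure ℝ) : Set (Measure (ℝ × ℝ)) :=
  {π | π.map Prod.fst = μ₀ ∧ π.map Prod.snd = μ₁}

/-- the unregularized optimal transport cost. -/
def OTcost (μ₀ μ₁ : Measure ℝ) : ℝ≥0∞ :=
  ⨅ π ∈ Couplings μ₀ μ₁, ∫⁻ p, ENNReal.ofReal ((p.1 - p.2) ^ 2 / 2) ∂π

/-- the quadratically regularized optimal transport cost; the penalty is `+∞` when the
coupling is not absolutely continuous with respect to `μ₀ ⊗ μ₁`. -/
def QOTcost (μ₀ μ₁ : Measure ℝ) (ε : ℝ) : ℝ≥0∞ :=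
  ⨅ π ∈ Couplings μ₀ μ₁,
    (∫⁻ p, ENNReal.ofReal ((p.1 - p.2) ^ 2 / 2) ∂π) +
      (if π ≪ μ₀.prod μ₁ then
        ENNReal.ofReal ε / 2 * ∫⁻ p, π.rnDeriv (μ₀.prod μ₁) p ^ 2 ∂(μ₀.prod μ₁)
      else ⊤)

section ConvexConjugate

variable {a b x : ℝ} {f : ℝ → ℝ}

theorem bddAbove_image_mul_sub (hf : ContinuousOn f (Icc a b)) (y : ℝ) :
    BddAbove ((fun x => x * y - f x) '' Icc a b) :=
  (isCompact_Icc.image_of_continuousOn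
    ((continuousOn_id.mul continuousOn_const).sub hf)).bddAbove

theorem mul_le_add_conjOn (hf : ContinuousOn f (Icc a b)) (hx : x ∈ Icc a b) (y : ℝ) :
    x * y ≤ f x + conjOn f a b y := by
  have : x * y - f x ≤ conjOn f a b y :=
    le_csSup (bddAbove_image_mul_sub hf y) (mem_image_of_mem _ hx)
  linarith

theorem conjOn_le (hab : a ≤ b) {y M : ℝ} (h : ∀ x ∈ Icc a b, x * y - f x ≤ M) :
    conjOn f a b y ≤ M :=
  csSup_le ((nonempty_Icc.mpr hab).image _) (forall_mem_image.mpr h)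

theorem lipschitzWith_conjOn (hab : a ≤ b) (hf : ContinuousOn f (Icc a b)) :
    LipschitzWith (max |a| |b|).toNNReal (conjOn f a b) := by
  refine LipschitzWith.of_le_add_mul' _ fun y z => conjOn_le hab fun x hx => ?_
  have hxz : x * (y - z) ≤ max |a| |b| * dist y z := by
    rw [Real.dist_eq]
    calc x * (y - z) ≤ |x| * |y - z| := (le_abs_self _).trans (abs_mul _ _).le
      _ ≤ max |a| |b| * |y - z| := by gcongr; exact abs_le_max_abs_abs hx.1 hx.2
  linarith [mul_le_add_conjOn hf hx z]

theorem conjOn_eq_of_hasDerivWithinAt (hf : ConvexOn ℝ (Icc a b) f) (hx : x ∈ Icc a b) {d : ℝ}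
    (hd : HasDerivWithinAt f d (Icc a b) x) : conjOn f a b d = x * d - f x := by
  refine IsGreatest.csSup_eq ⟨mem_image_of_mem _ hx, forall_mem_image.mpr fun z hz => ?_⟩
  rcases lt_trichotomy z x with h | rfl | h
  · have hs := hf.slope_le_of_hasDerivWithinAt hz hx h hd
    rw [slope_def_field, div_le_iff₀ (sub_pos.mpr h)] at hs
    linarith
  · exact le_rfl
  · have hs := hf.le_slope_of_hasDerivWithinAt hx hz h hd
    rw [slope_def_field, le_div_iff₀ (sub_pos.mpr h)] at hs
    linarith

end ConvexConjugate

section Couplings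

variable {X Y : Type*} [MeasurableSpace X] [MeasurableSpace Y]

theorem ae_mem_of_eq_withDensity_restrict {μ ν : Measure X} {s : Set X} {u : X → ℝ≥0∞}
    (hs : MeasurableSet s) (h : μ = (ν.restrict s).withDensity u) : ∀ᵐ x ∂μ, x ∈ s :=
  h ▸ (withDensity_absolutelyContinuous _ _).ae_le (ae_restrict_mem hs)

theorem integrable_of_continuousOn_of_ae_mem [TopologicalSpace X] [OpensMeasurableSpace X]
    [T2Space X] {μ : Measure X} [IsFiniteMeasure μ] {K : Set X} {k : X → ℝ}
    (hK : IsCompact K) (hμ : ∀ᵐ x ∂μ, x ∈ K) (hk : ContinuousOn k K) : Integrable k μ := by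
  simpa only [IntegrableOn, Measure.restrict_eq_self_of_ae_mem hμ] using
    hk.integrableOn_compact (μ := μ) hK

theorem integral_add_comp_fst_snd {π : Measure (X × Y)} {φ : X → ℝ} {ψ : Y → ℝ}
    (hφ : Integrable φ (π.map Prod.fst)) (hψ : Integrable ψ (π.map Prod.snd)) :
    ∫ p, (φ p.1 + ψ p.2) ∂π = ∫ x, φ x ∂(π.map Prod.fst) + ∫ y, ψ y ∂(π.map Prod.snd) := by
  rw [integral_map measurable_fst.aemeasurable hφ.1, integral_map measurable_snd.aemeasurable hψ.1]
  exact integral_add (hφ.comp_measurable measurable_fst) (hψ.comp_measurable measurable_snd)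

theorem map_fst_withDensity_prod {μ : Measure X} {ν : Measure Y} [SFinite μ] [SFinite ν]
    {ρ : X × Y → ℝ≥0∞} (hρ : AEMeasurable ρ (μ.prod ν))
    (h : ∀ᵐ x ∂μ, ∫⁻ y, ρ (x, y) ∂ν = 1) : ((μ.prod ν).withDensity ρ).map Prod.fst = μ := by
  ext s hs
  rw [Measure.map_apply measurable_fst hs, withDensity_apply' _ _, ← prod_univ,
    ← Measure.prod_restrict s univ, Measure.restrict_univ,
    lintegral_prod _ (hρ.mono_ac (Measure.restrict_le_self.absolutelyContinuous.prod .rfl)),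
    lintegral_congr_ae (ae_restrict_of_ae h), setLIntegral_one]

theorem map_snd_withDensity_prod {μ : Measure X} {ν : Measure Y} [SFinite μ] [SFinite ν]
    {ρ : X × Y → ℝ≥0∞} (hρ : AEMeasurable ρ (μ.prod ν))
    (h : ∀ᵐ y ∂ν, ∫⁻ x, ρ (x, y) ∂μ = 1) : ((μ.prod ν).withDensity ρ).map Prod.snd = ν := by
  ext s hs
  rw [Measure.map_apply measurable_snd hs, withDensity_apply' _ _, ← univ_prod,
    ← Measure.prod_restrict univ s, Measure.restrict_univ,
    lintegral_prod_symm _ (hρ.mono_ac (Measure.AbsolutelyContinuous.rfl.prod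
      Measure.restrict_le_self.absolutelyContinuous)),
    lintegral_congr_ae (ae_restrict_of_ae h), setLIntegral_one]

end Couplings

section Transport

variable {μ₀ μ₁ : Measure ℝ} {π : Measure (ℝ × ℝ)} {a₀ b₀ a₁ b₁ : ℝ}

theorem isProbabilityMeasure_of_mem_couplings [IsProbabilityMeasure μ₀]
    (hπ : π ∈ Couplings μ₀ μ₁) : IsProbabilityMeasure π :=
  have : IsProbabilityMeasure (π.map Prod.fst) := hπ.1 ▸ ‹_›
  Measure.isProbabilityMeasure_of_map Prod.fst

theorem prod_mem_couplings [IsProbabilityMeasure μ₀] [IsProbabilityMeasure μ₁] :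
    μ₀.prod μ₁ ∈ Couplings μ₀ μ₁ :=
  ⟨by simp, by simp⟩

theorem map_prodMk_mem_couplings {T : ℝ → ℝ} (hT : Measurable T) (hTμ : μ₀.map T = μ₁) :
    μ₀.map (fun x => (x, T x)) ∈ Couplings μ₀ μ₁ := by
  have hgraph : Measurable fun x => (x, T x) := measurable_id.prodMk hT
  exact ⟨by rw [Measure.map_map measurable_fst hgraph]; exact Measure.map_id,
    by rwa [Measure.map_map measurable_snd hgraph]⟩

theorem integrable_of_mem_couplings [IsProbabilityMeasure μ₀] (hπ : π ∈ Couplings μ₀ μ₁)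
    (h₀ : ∀ᵐ x ∂μ₀, x ∈ Icc a₀ b₀) (h₁ : ∀ᵐ y ∂μ₁, y ∈ Icc a₁ b₁) {k : ℝ × ℝ → ℝ}
    (hk : ContinuousOn k (Icc a₀ b₀ ×ˢ Icc a₁ b₁)) : Integrable k π :=
  have := isProbabilityMeasure_of_mem_couplings hπ
  integrable_of_continuousOn_of_ae_mem (isCompact_Icc.prod isCompact_Icc)
    ((ae_of_ae_map measurable_fst.aemeasurable (hπ.1 ▸ h₀)).and
      (ae_of_ae_map measurable_snd.aemeasurable (hπ.2 ▸ h₁))) hk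

theorem lintegral_cost_eq_ofReal_integral [IsProbabilityMeasure μ₀] (hπ : π ∈ Couplings μ₀ μ₁)
    (h₀ : ∀ᵐ x ∂μ₀, x ∈ Icc a₀ b₀) (h₁ : ∀ᵐ y ∂μ₁, y ∈ Icc a₁ b₁) :
    ∫⁻ p, ENNReal.ofReal ((p.1 - p.2) ^ 2 / 2) ∂π =
      ENNReal.ofReal (∫ p, (p.1 - p.2) ^ 2 / 2 ∂π) :=
  (ofReal_integral_eq_lintegral_ofReal
    (integrable_of_mem_couplings hπ h₀ h₁ (by fun_prop : Continuous _).continuousOn)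
    (ae_of_all _ fun _ => by positivity)).symm

theorem ContinuousOn.mul_sub_sub {s t : Set ℝ} {φ ψ : ℝ → ℝ} (hφ : ContinuousOn φ s)
    (hψ : ContinuousOn ψ t) : ContinuousOn (fun p : ℝ × ℝ => p.1 * p.2 - φ p.1 - ψ p.2) (s ×ˢ t) :=
  ((continuousOn_fst.mul continuousOn_snd).sub (hφ.comp continuousOn_fst fun _ hp => hp.1)).sub
    (hψ.comp continuousOn_snd fun _ hp => hp.2)

/-- Since `(x - y)² / 2 = x² / 2 + y² / 2 - x y`, potentials `φ, ψ` for the product cost `x y`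
correspond to the Kantorovich potentials `x² / 2 - φ x` and `y² / 2 - ψ y` of the quadratic cost. -/
def kantorovichDual (μ₀ μ₁ : Measure ℝ) (φ ψ : ℝ → ℝ) : ℝ :=
  ∫ x, (x ^ 2 / 2 - φ x) ∂μ₀ + ∫ y, (y ^ 2 / 2 - ψ y) ∂μ₁

theorem integrable_sq_div_two_sub {μ : Measure ℝ} [IsFiniteMeasure μ] {a b : ℝ} {φ : ℝ → ℝ}
    (h : ∀ᵐ x ∂μ, x ∈ Icc a b) (hφ : ContinuousOn φ (Icc a b)) :
    Integrable (fun x => x ^ 2 / 2 - φ x) μ :=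
  integrable_of_continuousOn_of_ae_mem isCompact_Icc h
    (((continuous_pow 2).div_const 2).continuousOn.sub hφ)

theorem kantorovichDual_sub_kantorovichDual [IsFiniteMeasure μ₀] [IsFiniteMeasure μ₁]
    (h₀ : ∀ᵐ x ∂μ₀, x ∈ Icc a₀ b₀) (h₁ : ∀ᵐ y ∂μ₁, y ∈ Icc a₁ b₁) {φ ψ φ' ψ' : ℝ → ℝ}
    (hφ : ContinuousOn φ (Icc a₀ b₀)) (hψ : ContinuousOn ψ (Icc a₁ b₁))
    (hφ' : ContinuousOn φ' (Icc a₀ b₀)) (hψ' : ContinuousOn ψ' (Icc a₁ b₁)) :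
    kantorovichDual μ₀ μ₁ φ ψ - kantorovichDual μ₀ μ₁ φ' ψ' =
      ∫ x, (φ' x - φ x) ∂μ₀ + ∫ y, (ψ' y - ψ y) ∂μ₁ := by
  have e₀ : ∫ x, (φ' x - φ x) ∂μ₀ = ∫ x, (x ^ 2 / 2 - φ x) ∂μ₀ - ∫ x, (x ^ 2 / 2 - φ' x) ∂μ₀ := by
    rw [← integral_sub (integrable_sq_div_two_sub h₀ hφ) (integrable_sq_div_two_sub h₀ hφ')]
    congr 1 with x
    ring
  have e₁ : ∫ y, (ψ' y - ψ y) ∂μ₁ = ∫ y, (y ^ 2 / 2 - ψ y) ∂μ₁ - ∫ y, (y ^ 2 / 2 - ψ' y) ∂μ₁ := by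
    rw [← integral_sub (integrable_sq_div_two_sub h₁ hψ) (integrable_sq_div_two_sub h₁ hψ')]
    congr 1 with y
    ring
  rw [kantorovichDual, kantorovichDual, e₀, e₁]
  ring

variable [IsProbabilityMeasure μ₀] [IsProbabilityMeasure μ₁]

theorem integral_cost_eq_kantorovichDual_sub (hπ : π ∈ Couplings μ₀ μ₁)
    (h₀ : ∀ᵐ x ∂μ₀, x ∈ Icc a₀ b₀) (h₁ : ∀ᵐ y ∂μ₁, y ∈ Icc a₁ b₁) {φ ψ : ℝ → ℝ}
    (hφ : ContinuousOn φ (Icc a₀ b₀)) (hψ : ContinuousOn ψ (Icc a₁ b₁)) :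
    ∫ p, (p.1 - p.2) ^ 2 / 2 ∂π =
      kantorovichDual μ₀ μ₁ φ ψ - ∫ p, (p.1 * p.2 - φ p.1 - ψ p.2) ∂π := by
  have hF := integrable_sq_div_two_sub h₀ hφ
  have hG := integrable_sq_div_two_sub h₁ hψ
  have hdual := integral_add_comp_fst_snd (hπ.1 ▸ hF) (hπ.2 ▸ hG)
  rw [hπ.1, hπ.2] at hdual
  have hFG : Integrable (fun p : ℝ × ℝ => p.1 ^ 2 / 2 - φ p.1 + (p.2 ^ 2 / 2 - ψ p.2)) π :=
    ((hπ.1 ▸ hF).comp_measurable measurable_fst).add ((hπ.2 ▸ hG).comp_measurable measurable_snd)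
  rw [kantorovichDual, ← hdual,
    ← integral_sub hFG (integrable_of_mem_couplings hπ h₀ h₁ (hφ.mul_sub_sub hψ))]
  congr 1 with p
  ring

theorem kantorovichDual_le_integral_cost (hπ : π ∈ Couplings μ₀ μ₁)
    (h₀ : ∀ᵐ x ∂μ₀, x ∈ Icc a₀ b₀) (h₁ : ∀ᵐ y ∂μ₁, y ∈ Icc a₁ b₁) {φ ψ : ℝ → ℝ}
    (hφ : ContinuousOn φ (Icc a₀ b₀)) (hψ : ContinuousOn ψ (Icc a₁ b₁))
    (hle : ∀ x ∈ Icc a₀ b₀, ∀ y ∈ Icc a₁ b₁, x * y ≤ φ x + ψ y) :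
    kantorovichDual μ₀ μ₁ φ ψ ≤ ∫ p, (p.1 - p.2) ^ 2 / 2 ∂π := by
  have hgap : ∫ p, (p.1 * p.2 - φ p.1 - ψ p.2) ∂π ≤ 0 := by
    refine integral_nonpos_of_ae ?_
    filter_upwards [ae_of_ae_map measurable_fst.aemeasurable (hπ.1 ▸ h₀),
      ae_of_ae_map measurable_snd.aemeasurable (hπ.2 ▸ h₁)] with p hp₁ hp₂
    rw [Pi.zero_apply]
    linarith [hle _ hp₁ _ hp₂]
  linarith [integral_cost_eq_kantorovichDual_sub hπ h₀ h₁ hφ hψ]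

theorem integral_cost_map_prodMk {T : ℝ → ℝ} (hT : Measurable T) (hTμ : μ₀.map T = μ₁)
    (h₀ : ∀ᵐ x ∂μ₀, x ∈ Icc a₀ b₀) (h₁ : ∀ᵐ y ∂μ₁, y ∈ Icc a₁ b₁) {φ ψ : ℝ → ℝ}
    (hφ : ContinuousOn φ (Icc a₀ b₀)) (hψ : ContinuousOn ψ (Icc a₁ b₁))
    (heq : ∀ x ∈ Icc a₀ b₀, φ x + ψ (T x) = x * T x) :
    ∫ p, (p.1 - p.2) ^ 2 / 2 ∂(μ₀.map fun x => (x, T x)) = kantorovichDual μ₀ μ₁ φ ψ := by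
  have hπ := map_prodMk_mem_couplings hT hTμ
  have hgap := integrable_of_mem_couplings hπ h₀ h₁ (hφ.mul_sub_sub hψ)
  rw [integral_cost_eq_kantorovichDual_sub hπ h₀ h₁ hφ hψ,
    integral_map (measurable_id'.prodMk hT).aemeasurable hgap.1, sub_eq_self]
  refine integral_eq_zero_of_ae ?_
  filter_upwards [h₀] with x hx
  rw [Pi.zero_apply]
  linarith [heq x hx]

theorem OTcost_eq_of_integral_cost_eq (hπ : π ∈ Couplings μ₀ μ₁)
    (h₀ : ∀ᵐ x ∂μ₀, x ∈ Icc a₀ b₀) (h₁ : ∀ᵐ y ∂μ₁, y ∈ Icc a₁ b₁) {φ ψ : ℝ → ℝ}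
    (hφ : ContinuousOn φ (Icc a₀ b₀)) (hψ : ContinuousOn ψ (Icc a₁ b₁))
    (hle : ∀ x ∈ Icc a₀ b₀, ∀ y ∈ Icc a₁ b₁, x * y ≤ φ x + ψ y)
    (hcost : ∫ p, (p.1 - p.2) ^ 2 / 2 ∂π = kantorovichDual μ₀ μ₁ φ ψ) :
    OTcost μ₀ μ₁ = ENNReal.ofReal (kantorovichDual μ₀ μ₁ φ ψ) := by
  refine le_antisymm ?_ (le_iInf₂ fun π' hπ' => ?_)
  · rw [← hcost, ← lintegral_cost_eq_ofReal_integral hπ h₀ h₁]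
    exact iInf₂_le π hπ
  · rw [lintegral_cost_eq_ofReal_integral hπ' h₀ h₁]
    exact ENNReal.ofReal_le_ofReal (kantorovichDual_le_integral_cost hπ' h₀ h₁ hφ hψ hle)

theorem toReal_OTcost_eq_of_isMongeMap (hab : a₀ ≤ b₀) (h₀ : ∀ᵐ x ∂μ₀, x ∈ Icc a₀ b₀)
    (h₁ : ∀ᵐ y ∂μ₁, y ∈ Icc a₁ b₁) {T₀ f₀ : ℝ → ℝ} (hT₀ : IsMongeMap μ₀ μ₁ T₀)
    (hf₀ : ConvexOn ℝ (Icc a₀ b₀) f₀)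
    (hf₀' : ∀ x ∈ Icc a₀ b₀, HasDerivWithinAt f₀ (T₀ x) (Icc a₀ b₀) x) :
    (OTcost μ₀ μ₁).toReal = kantorovichDual μ₀ μ₁ f₀ (conjOn f₀ a₀ b₀) := by
  have hf₀c : ContinuousOn f₀ (Icc a₀ b₀) := fun x hx => (hf₀' x hx).continuousWithinAt
  have hg₀c := (lipschitzWith_conjOn hab hf₀c).continuous.continuousOn (s := Icc a₁ b₁)
  have hcost := integral_cost_map_prodMk hT₀.1.measurable hT₀.2 h₀ h₁ hf₀c hg₀c fun x hx => by
    rw [conjOn_eq_of_hasDerivWithinAt hf₀ hx (hf₀' x hx)]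
    ring
  rw [OTcost_eq_of_integral_cost_eq (map_prodMk_mem_couplings hT₀.1.measurable hT₀.2) h₀ h₁
      hf₀c hg₀c (fun x hx y _ => mul_le_add_conjOn hf₀c hx y) hcost,
    ENNReal.toReal_ofReal (hcost ▸ integral_nonneg fun _ => by positivity)]

end Transport

section Regularized

variable {μ₀ μ₁ : Measure ℝ} {π : Measure (ℝ × ℝ)} {a₀ b₀ a₁ b₁ ε : ℝ} {f g : ℝ → ℝ}

/-- The density, with respect to `μ₀ ⊗ μ₁`, of the optimal coupling of the regularized problem. -/
def regDensity (ε : ℝ) (f g : ℝ → ℝ) (p : ℝ × ℝ) : ℝ :=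
  max (p.1 * p.2 - f p.1 - g p.2) 0 / ε

def regCoupling (μ₀ μ₁ : Measure ℝ) (ε : ℝ) (f g : ℝ → ℝ) : Measure (ℝ × ℝ) :=
  (μ₀.prod μ₁).withDensity fun p => ENNReal.ofReal (regDensity ε f g p)

theorem regDensity_nonneg (hε : 0 ≤ ε) (p : ℝ × ℝ) : 0 ≤ regDensity ε f g p :=
  div_nonneg (le_max_right _ _) hε

theorem mul_sub_sub_le_mul_regDensity (hε : 0 < ε) (p : ℝ × ℝ) :
    p.1 * p.2 - f p.1 - g p.2 ≤ ε * regDensity ε f g p := by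
  rw [regDensity, mul_div_cancel₀ _ hε.ne']
  exact le_max_left _ _

theorem regDensity_mul_mul_sub_sub (hε : 0 < ε) (p : ℝ × ℝ) :
    regDensity ε f g p * (p.1 * p.2 - f p.1 - g p.2) = ε * regDensity ε f g p ^ 2 := by
  rcases le_total (p.1 * p.2 - f p.1 - g p.2) 0 with h | h
  · simp [regDensity, max_eq_right h]
  · rw [regDensity, max_eq_left h]
    field_simp

theorem IsPotentialPair.continuousOn_left (h : IsPotentialPair μ₀ μ₁ a₀ b₀ a₁ b₁ ε f g) :
    ContinuousOn f (Icc a₀ b₀) :=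
  let ⟨⟨_, hf⟩, _⟩ := h
  hf.continuousOn

theorem IsPotentialPair.continuousOn_right (h : IsPotentialPair μ₀ μ₁ a₀ b₀ a₁ b₁ ε f g) :
    ContinuousOn g (Icc a₁ b₁) :=
  let ⟨_, ⟨_, hg⟩, _⟩ := h
  hg.continuousOn

theorem IsPotentialPair.continuousOn_regDensity (h : IsPotentialPair μ₀ μ₁ a₀ b₀ a₁ b₁ ε f g) :
    ContinuousOn (regDensity ε f g) (Icc a₀ b₀ ×ˢ Icc a₁ b₁) :=
  (ContinuousOn.sup (h.continuousOn_left.mul_sub_sub h.continuousOn_right)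
    continuousOn_const).div_const ε

theorem IsPotentialPair.lintegral_regDensity_right [IsFiniteMeasure μ₁]
    (h : IsPotentialPair μ₀ μ₁ a₀ b₀ a₁ b₁ ε f g) (hε : 0 < ε) (h₁ : ∀ᵐ y ∂μ₁, y ∈ Icc a₁ b₁)
    {x : ℝ} (hx : x ∈ Icc a₀ b₀) : ∫⁻ y, ENNReal.ofReal (regDensity ε f g (x, y)) ∂μ₁ = 1 := by
  have hint : Integrable (fun y => regDensity ε f g (x, y)) μ₁ :=
    integrable_of_continuousOn_of_ae_mem isCompact_Icc h₁
      (h.continuousOn_regDensity.comp (Continuous.prodMk_right x).continuousOn fun _ hy => ⟨hx, hy⟩)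
  have hmarg := h.2.2.1 x hx
  rw [Measure.restrict_eq_self_of_ae_mem h₁] at hmarg
  rw [← ofReal_integral_eq_lintegral_ofReal hint (ae_of_all _ fun _ => regDensity_nonneg hε.le _)]
  simp only [regDensity]
  rw [integral_div, hmarg, div_self hε.ne', ENNReal.ofReal_one]

theorem IsPotentialPair.lintegral_regDensity_left [IsFiniteMeasure μ₀]
    (h : IsPotentialPair μ₀ μ₁ a₀ b₀ a₁ b₁ ε f g) (hε : 0 < ε) (h₀ : ∀ᵐ x ∂μ₀, x ∈ Icc a₀ b₀)
    {y : ℝ} (hy : y ∈ Icc a₁ b₁) : ∫⁻ x, ENNReal.ofReal (regDensity ε f g (x, y)) ∂μ₀ = 1 := by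
  have hint : Integrable (fun x => regDensity ε f g (x, y)) μ₀ :=
    integrable_of_continuousOn_of_ae_mem isCompact_Icc h₀
      (h.continuousOn_regDensity.comp (Continuous.prodMk_left y).continuousOn fun _ hx => ⟨hx, hy⟩)
  have hmarg := h.2.2.2 y hy
  rw [Measure.restrict_eq_self_of_ae_mem h₀] at hmarg
  rw [← ofReal_integral_eq_lintegral_ofReal hint (ae_of_all _ fun _ => regDensity_nonneg hε.le _)]
  simp only [regDensity]
  rw [integral_div, hmarg, div_self hε.ne', ENNReal.ofReal_one]

theorem IsPotentialPair.integrable_regDensity [IsProbabilityMeasure μ₀]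
    (h : IsPotentialPair μ₀ μ₁ a₀ b₀ a₁ b₁ ε f g)
    (hπ : π ∈ Couplings μ₀ μ₁) (h₀ : ∀ᵐ x ∂μ₀, x ∈ Icc a₀ b₀) (h₁ : ∀ᵐ y ∂μ₁, y ∈ Icc a₁ b₁) :
    Integrable (regDensity ε f g) π :=
  integrable_of_mem_couplings hπ h₀ h₁ h.continuousOn_regDensity

variable [IsProbabilityMeasure μ₀] [IsProbabilityMeasure μ₁]

theorem IsPotentialPair.integrable_regDensity_sq (h : IsPotentialPair μ₀ μ₁ a₀ b₀ a₁ b₁ ε f g)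
    (h₀ : ∀ᵐ x ∂μ₀, x ∈ Icc a₀ b₀) (h₁ : ∀ᵐ y ∂μ₁, y ∈ Icc a₁ b₁) :
    Integrable (fun p => regDensity ε f g p ^ 2) (μ₀.prod μ₁) :=
  integrable_of_mem_couplings prod_mem_couplings h₀ h₁ (h.continuousOn_regDensity.pow 2)

theorem IsPotentialPair.aemeasurable_ofReal_regDensity
    (h : IsPotentialPair μ₀ μ₁ a₀ b₀ a₁ b₁ ε f g)
    (h₀ : ∀ᵐ x ∂μ₀, x ∈ Icc a₀ b₀) (h₁ : ∀ᵐ y ∂μ₁, y ∈ Icc a₁ b₁) :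
    AEMeasurable (fun p => ENNReal.ofReal (regDensity ε f g p)) (μ₀.prod μ₁) :=
  (h.integrable_regDensity prod_mem_couplings h₀ h₁).1.aemeasurable.ennreal_ofReal

theorem IsPotentialPair.regCoupling_mem_couplings (h : IsPotentialPair μ₀ μ₁ a₀ b₀ a₁ b₁ ε f g)
    (hε : 0 < ε) (h₀ : ∀ᵐ x ∂μ₀, x ∈ Icc a₀ b₀) (h₁ : ∀ᵐ y ∂μ₁, y ∈ Icc a₁ b₁) :
    regCoupling μ₀ μ₁ ε f g ∈ Couplings μ₀ μ₁ :=
  ⟨map_fst_withDensity_prod (h.aemeasurable_ofReal_regDensity h₀ h₁)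
      (h₀.mono fun _ hx => h.lintegral_regDensity_right hε h₁ hx),
    map_snd_withDensity_prod (h.aemeasurable_ofReal_regDensity h₀ h₁)
      (h₁.mono fun _ hy => h.lintegral_regDensity_left hε h₀ hy)⟩

theorem IsPotentialPair.integral_regCoupling (h : IsPotentialPair μ₀ μ₁ a₀ b₀ a₁ b₁ ε f g)
    (hε : 0 < ε) (h₀ : ∀ᵐ x ∂μ₀, x ∈ Icc a₀ b₀) (h₁ : ∀ᵐ y ∂μ₁, y ∈ Icc a₁ b₁)
    (k : ℝ × ℝ → ℝ) :
    ∫ p, k p ∂regCoupling μ₀ μ₁ ε f g = ∫ p, regDensity ε f g p * k p ∂(μ₀.prod μ₁) := by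
  rw [regCoupling, integral_withDensity_eq_integral_toReal_smul₀
    (h.aemeasurable_ofReal_regDensity h₀ h₁) (ae_of_all _ fun _ => ENNReal.ofReal_lt_top)]
  simp only [ENNReal.toReal_ofReal (regDensity_nonneg hε.le _), smul_eq_mul]

theorem IsPotentialPair.integral_cost_regCoupling (h : IsPotentialPair μ₀ μ₁ a₀ b₀ a₁ b₁ ε f g)
    (hε : 0 < ε) (h₀ : ∀ᵐ x ∂μ₀, x ∈ Icc a₀ b₀) (h₁ : ∀ᵐ y ∂μ₁, y ∈ Icc a₁ b₁) :
    ∫ p, (p.1 - p.2) ^ 2 / 2 ∂regCoupling μ₀ μ₁ ε f g =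
      kantorovichDual μ₀ μ₁ f g - ε * ∫ p, regDensity ε f g p ^ 2 ∂(μ₀.prod μ₁) := by
  rw [integral_cost_eq_kantorovichDual_sub (h.regCoupling_mem_couplings hε h₀ h₁) h₀ h₁
      h.continuousOn_left h.continuousOn_right, h.integral_regCoupling hε h₀ h₁,
    ← integral_const_mul]
  simp only [regDensity_mul_mul_sub_sub hε]

theorem IsPotentialPair.lintegral_rnDeriv_regCoupling_sq
    (h : IsPotentialPair μ₀ μ₁ a₀ b₀ a₁ b₁ ε f g) (hε : 0 < ε)
    (h₀ : ∀ᵐ x ∂μ₀, x ∈ Icc a₀ b₀) (h₁ : ∀ᵐ y ∂μ₁, y ∈ Icc a₁ b₁) :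
    ∫⁻ p, (regCoupling μ₀ μ₁ ε f g).rnDeriv (μ₀.prod μ₁) p ^ 2 ∂(μ₀.prod μ₁) =
      ENNReal.ofReal (∫ p, regDensity ε f g p ^ 2 ∂(μ₀.prod μ₁)) := by
  rw [ofReal_integral_eq_lintegral_ofReal (h.integrable_regDensity_sq h₀ h₁)
    (ae_of_all _ fun _ => sq_nonneg _)]
  refine lintegral_congr_ae ?_
  filter_upwards [Measure.rnDeriv_withDensity₀ _ (h.aemeasurable_ofReal_regDensity h₀ h₁)]
    with p hp
  rw [regCoupling, hp, ENNReal.ofReal_pow (regDensity_nonneg hε.le _)]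

theorem IsPotentialPair.kantorovichDual_sub_le_integral_cost_add
    (h : IsPotentialPair μ₀ μ₁ a₀ b₀ a₁ b₁ ε f g) (hε : 0 < ε)
    (h₀ : ∀ᵐ x ∂μ₀, x ∈ Icc a₀ b₀) (h₁ : ∀ᵐ y ∂μ₁, y ∈ Icc a₁ b₁)
    (hπ : π ∈ Couplings μ₀ μ₁) (hac : π ≪ μ₀.prod μ₁)
    (hfin : ∫⁻ p, π.rnDeriv (μ₀.prod μ₁) p ^ 2 ∂(μ₀.prod μ₁) ≠ ∞) :
    kantorovichDual μ₀ μ₁ f g - ε / 2 * ∫ p, regDensity ε f g p ^ 2 ∂(μ₀.prod μ₁) ≤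
      ∫ p, (p.1 - p.2) ^ 2 / 2 ∂π +
        ε / 2 * (∫⁻ p, π.rnDeriv (μ₀.prod μ₁) p ^ 2 ∂(μ₀.prod μ₁)).toReal := by
  have := isProbabilityMeasure_of_mem_couplings hπ
  set ξ : ℝ × ℝ → ℝ := fun p => (π.rnDeriv (μ₀.prod μ₁) p).toReal
  have hξm : AEMeasurable (fun p => π.rnDeriv (μ₀.prod μ₁) p ^ 2) (μ₀.prod μ₁) :=
    (Measure.measurable_rnDeriv _ _).pow_const 2 |>.aemeasurable
  have hξ2 : ∫ p, ξ p ^ 2 ∂(μ₀.prod μ₁) =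
      (∫⁻ p, π.rnDeriv (μ₀.prod μ₁) p ^ 2 ∂(μ₀.prod μ₁)).toReal := by
    simp only [ξ, ← ENNReal.toReal_pow]
    exact integral_toReal hξm ((Measure.rnDeriv_lt_top _ _).mono fun _ hp => ENNReal.pow_lt_top hp)
  have hξ2int : Integrable (fun p => ξ p ^ 2) (μ₀.prod μ₁) := by
    simpa only [ξ, ENNReal.toReal_pow] using integrable_toReal_of_lintegral_ne_top hξm hfin
  have hρπ := h.integrable_regDensity hπ h₀ h₁
  have hgap : ∫ p, (p.1 * p.2 - f p.1 - g p.2) ∂π ≤ ε * ∫ p, regDensity ε f g p ∂π := by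
    rw [← integral_const_mul]
    exact integral_mono (integrable_of_mem_couplings hπ h₀ h₁
      (h.continuousOn_left.mul_sub_sub h.continuousOn_right)) (hρπ.const_mul ε)
      (mul_sub_sub_le_mul_regDensity hε)
  have hyoung : ∫ p, regDensity ε f g p ∂π ≤
      (∫ p, ξ p ^ 2 ∂(μ₀.prod μ₁) + ∫ p, regDensity ε f g p ^ 2 ∂(μ₀.prod μ₁)) / 2 := by
    rw [← integral_rnDeriv_smul hac, ← integral_add hξ2int (h.integrable_regDensity_sq h₀ h₁),
      ← integral_div]
    refine integral_mono ((integrable_rnDeriv_smul_iff hac).2 hρπ)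
      ((hξ2int.add (h.integrable_regDensity_sq h₀ h₁)).div_const 2) fun p => ?_
    simp only [smul_eq_mul]
    nlinarith [sq_nonneg (ξ p - regDensity ε f g p)]
  rw [integral_cost_eq_kantorovichDual_sub hπ h₀ h₁ h.continuousOn_left h.continuousOn_right,
    ← hξ2]
  linarith [mul_le_mul_of_nonneg_left hyoung hε.le]

theorem ENNReal.ofReal_div_two_mul_ofReal (hε : 0 ≤ ε) (B : ℝ) :
    ENNReal.ofReal ε / 2 * ENNReal.ofReal B = ENNReal.ofReal (ε / 2 * B) := by
  rw [ENNReal.ofReal_mul (by positivity), ENNReal.ofReal_div_of_pos two_pos, ENNReal.ofReal_ofNat]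

theorem IsPotentialPair.QOTcost_le (h : IsPotentialPair μ₀ μ₁ a₀ b₀ a₁ b₁ ε f g) (hε : 0 < ε)
    (h₀ : ∀ᵐ x ∂μ₀, x ∈ Icc a₀ b₀) (h₁ : ∀ᵐ y ∂μ₁, y ∈ Icc a₁ b₁) :
    QOTcost μ₀ μ₁ ε ≤ ENNReal.ofReal
      (kantorovichDual μ₀ μ₁ f g - ε / 2 * ∫ p, regDensity ε f g p ^ 2 ∂(μ₀.prod μ₁)) := by
  have hπ := h.regCoupling_mem_couplings hε h₀ h₁
  have hcost := h.integral_cost_regCoupling hε h₀ h₁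
  have hcost_nonneg : 0 ≤ ∫ p, (p.1 - p.2) ^ 2 / 2 ∂regCoupling μ₀ μ₁ ε f g :=
    integral_nonneg fun _ => by positivity
  refine (iInf₂_le _ hπ).trans_eq ?_
  have hac : regCoupling μ₀ μ₁ ε f g ≪ μ₀.prod μ₁ := withDensity_absolutelyContinuous _ _
  rw [if_pos hac, lintegral_cost_eq_ofReal_integral hπ h₀ h₁,
    h.lintegral_rnDeriv_regCoupling_sq hε h₀ h₁, ENNReal.ofReal_div_two_mul_ofReal hε.le,
    ← ENNReal.ofReal_add hcost_nonneg (by positivity), hcost]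
  ring_nf

theorem IsPotentialPair.le_QOTcost (h : IsPotentialPair μ₀ μ₁ a₀ b₀ a₁ b₁ ε f g) (hε : 0 < ε)
    (h₀ : ∀ᵐ x ∂μ₀, x ∈ Icc a₀ b₀) (h₁ : ∀ᵐ y ∂μ₁, y ∈ Icc a₁ b₁) :
    ENNReal.ofReal (kantorovichDual μ₀ μ₁ f g - ε / 2 * ∫ p, regDensity ε f g p ^ 2 ∂(μ₀.prod μ₁))
      ≤ QOTcost μ₀ μ₁ ε := by
  refine le_iInf₂ fun π hπ => ?_
  split_ifs with hac
  · by_cases hfin : ∫⁻ p, π.rnDeriv (μ₀.prod μ₁) p ^ 2 ∂(μ₀.prod μ₁) = ∞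
    · simp [hfin, ENNReal.mul_top, hε]
    rw [lintegral_cost_eq_ofReal_integral hπ h₀ h₁, ← ENNReal.ofReal_toReal hfin,
      ENNReal.ofReal_div_two_mul_ofReal hε.le,
      ← ENNReal.ofReal_add (integral_nonneg fun _ => by positivity) (by positivity)]
    exact ENNReal.ofReal_le_ofReal
      (h.kantorovichDual_sub_le_integral_cost_add hε h₀ h₁ hπ hac hfin)
  · simp

theorem IsPotentialPair.toReal_QOTcost (h : IsPotentialPair μ₀ μ₁ a₀ b₀ a₁ b₁ ε f g) (hε : 0 < ε)
    (h₀ : ∀ᵐ x ∂μ₀, x ∈ Icc a₀ b₀) (h₁ : ∀ᵐ y ∂μ₁, y ∈ Icc a₁ b₁) :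
    (QOTcost μ₀ μ₁ ε).toReal =
      kantorovichDual μ₀ μ₁ f g - ε / 2 * ∫ p, regDensity ε f g p ^ 2 ∂(μ₀.prod μ₁) := by
  have hcost := h.integral_cost_regCoupling hε h₀ h₁
  have hcost_nonneg : 0 ≤ ∫ p, (p.1 - p.2) ^ 2 / 2 ∂regCoupling μ₀ μ₁ ε f g :=
    integral_nonneg fun _ => by positivity
  have hA : 0 ≤ ∫ p, regDensity ε f g p ^ 2 ∂(μ₀.prod μ₁) := integral_nonneg fun _ => sq_nonneg _
  rw [le_antisymm (h.QOTcost_le hε h₀ h₁) (h.le_QOTcost hε h₀ h₁), ENNReal.toReal_ofReal]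
  linarith [mul_nonneg hε.le hA]

end Regularized

theorem stmt18_general
    (a₀ b₀ a₁ b₁ lam Lam : ℝ) (μ₀ μ₁ : Measure ℝ) (u₀ u₁ : ℝ → ℝ)
    (hab₀ : a₀ < b₀)
    (hμ₀ : IsGoodMarginal μ₀ u₀ a₀ b₀ lam Lam)
    (hμ₁ : IsGoodMarginal μ₁ u₁ a₁ b₁ lam Lam) :
    ∀ ε : ℝ, 0 < ε → ∀ f g T₀ f₀ : ℝ → ℝ,
      IsPotentialPair μ₀ μ₁ a₀ b₀ a₁ b₁ ε f g →
      IsMongeMap μ₀ μ₁ T₀ →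
      ConvexOn ℝ (Icc a₀ b₀) f₀ →
      (∀ x ∈ Icc a₀ b₀, HasDerivWithinAt f₀ (T₀ x) (Icc a₀ b₀) x) →
      (QOTcost μ₀ μ₁ ε).toReal - (OTcost μ₀ μ₁).toReal ≤
        (∫ x in Icc a₀ b₀, (f₀ x - f x) ∂μ₀) +
          (∫ y in Icc a₁ b₁, (conjOn f₀ a₀ b₀ y - g y) ∂μ₁) ∧
      (∫ x in Icc a₀ b₀, (f₀ x - f x) ∂μ₀) +
          (∫ y in Icc a₁ b₁, (conjOn f₀ a₀ b₀ y - g y) ∂μ₁) ≤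
        2 * ((QOTcost μ₀ μ₁ ε).toReal - (OTcost μ₀ μ₁).toReal) := by
  intro ε hε f g T₀ f₀ hfg hT₀ hf₀ hf₀'
  have := hμ₀.1
  have := hμ₁.1
  have h₀ := ae_mem_of_eq_withDensity_restrict measurableSet_Icc hμ₀.2.1
  have h₁ := ae_mem_of_eq_withDensity_restrict measurableSet_Icc hμ₁.2.1
  have hf₀c : ContinuousOn f₀ (Icc a₀ b₀) := fun x hx => (hf₀' x hx).continuousWithinAt
  have hg₀c := (lipschitzWith_conjOn hab₀.le hf₀c).continuous.continuousOn (s := Icc a₁ b₁)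
  have hOT_le := kantorovichDual_le_integral_cost (hfg.regCoupling_mem_couplings hε h₀ h₁) h₀ h₁
    hf₀c hg₀c fun x hx y _ => mul_le_add_conjOn hf₀c hx y
  rw [hfg.integral_cost_regCoupling hε h₀ h₁] at hOT_le
  have hA : 0 ≤ ∫ p, regDensity ε f g p ^ 2 ∂(μ₀.prod μ₁) := integral_nonneg fun _ => sq_nonneg _
  rw [Measure.restrict_eq_self_of_ae_mem h₀, Measure.restrict_eq_self_of_ae_mem h₁,
    ← kantorovichDual_sub_kantorovichDual h₀ h₁ hfg.continuousOn_left hfg.continuousOn_right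
      hf₀c hg₀c, hfg.toReal_QOTcost hε h₀ h₁,
    toReal_OTcost_eq_of_isMongeMap hab₀.le h₀ h₁ hT₀ hf₀ hf₀']
  constructor <;> linarith [mul_nonneg hε.le hA]

theorem stmt18
    (a₀ b₀ a₁ b₁ lam Lam : ℝ) (μ₀ μ₁ : Measure ℝ) (u₀ u₁ : ℝ → ℝ)
    (hab₀ : a₀ < b₀) (hab₁ : a₁ < b₁) (hlam : 0 < lam)
    (hμ₀ : IsGoodMarginal μ₀ u₀ a₀ b₀ lam Lam)
    (hμ₁ : IsGoodMarginal μ₁ u₁ a₁ b₁ lam Lam) :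
    ∀ ε : ℝ, 0 < ε → ∀ f g T₀ f₀ : ℝ → ℝ,
      IsPotentialPair μ₀ μ₁ a₀ b₀ a₁ b₁ ε f g →
      IsMongeMap μ₀ μ₁ T₀ →
      ConvexOn ℝ (Icc a₀ b₀) f₀ →
      (∀ x ∈ Icc a₀ b₀, HasDerivWithinAt f₀ (T₀ x) (Icc a₀ b₀) x) →
      (QOTcost μ₀ μ₁ ε).toReal - (OTcost μ₀ μ₁).toReal ≤
        (∫ x in Icc a₀ b₀, (f₀ x - f x) ∂μ₀) +
          (∫ y in Icc a₁ b₁, (conjOn f₀ a₀ b₀ y - g y) ∂μ₁) ∧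
      (∫ x in Icc a₀ b₀, (f₀ x - f x) ∂μ₀) +
          (∫ y in Icc a₁ b₁, (conjOn f₀ a₀ b₀ y - g y) ∂μ₁) ≤
        2 * ((QOTcost μ₀ μ₁ ε).toReal - (OTcost μ₀ μ₁).toReal) :=
  stmt18_general a₀ b₀ a₁ b₁ lam Lam μ₀ μ₁ u₀ u₁ hab₀ hμ₀ hμ₁
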